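/- arXiv:2112.01311 — 2 statements merged into one kernel-verified Lean document; each statement's English description precedes it below -/
import Mathlib

section
/- In a merge tree T equipped with its simplex order, each subtree forms a chain of cover relations: if p is an inner node with leftmost leaf a and rightmost leaf b in its subtree, then the nodes of the subtree rooted at p form a chain of cover relations a ≺ ... ≺ p ≺ ... ≺ b in (V(T), ⪯). Moreover, for any two adjacent leaves, the left one is covered by their youngest common ancestor and the right one covers it. -/
/-- Chirality: left or right. -/
inductive Chir : Type
  | L : Chir
  | R : Chir
  deriving DecidableEq

/-- The opposite chirality. -/
def Chir.other : Chir → Chir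
  | .L => .R
  | .R => .L

/-- A merge tree: a full rooted chiral binary tree, encoded by the set of its nodes,
each node being the list of chiralities along the shortest path from the root to it
(the root is the empty list). -/
structure MergeTree : Type where
  nodes : Finset (List Chir)
  root_mem : [] ∈ nodes
  prefix_closed : ∀ (w : List Chir) (x : Chir), w ++ [x] ∈ nodes → w ∈ nodes
  full : ∀ w : List Chir, w ++ [Chir.L] ∈ nodes ↔ w ++ [Chir.R] ∈ nodes

/-- An inner node: a node with (two) children. -/
def MergeTree.IsInner (T : MergeTree) (n : List Chir) : Prop :=
  n ∈ T.nodes ∧ n ++ [Chir.L] ∈ T.nodes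

/-- A leaf node: a node without children. -/
def MergeTree.IsLeaf (T : MergeTree) (n : List Chir) : Prop :=
  n ∈ T.nodes ∧ n ++ [Chir.L] ∉ T.nodes

/-- The chirality of a node (the root has chirality `L` by convention). -/
def chir (n : List Chir) : Chir := n.getLast?.getD Chir.L

/-- The number of inner nodes of a merge tree. -/
def MergeTree.innerCount (T : MergeTree) : ℕ :=
  (T.nodes.filter fun n => n ++ [Chir.L] ∈ T.nodes).card

/-- Auxiliary comparison of path words; the first argument is the letter at the last
position where the two words agreed (cf. "a_k = b_k"): under a common `L`, the letter
`L` precedes `R`; under a common `R`, `R` precedes `L`; shorter words are larger. -/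
def leAux : Chir → List Chir → List Chir → Prop
  | _, _, [] => True
  | _, [], _ :: _ => False
  | last, x :: a, y :: b => if x = y then leAux x a b else x = last

/-- The sublevel-connected Morse order (comparison of path words; every path word
starts with the letter `L` for the root). -/
def scLe (a b : List Chir) : Prop := leAux Chir.L a b

/-- The index Morse order: leaves below inner nodes; among leaves and among inner
nodes, compare path words. -/
def ioLe (T : MergeTree) (a b : List Chir) : Prop :=
  (T.IsLeaf a ∧ T.IsInner b) ∨
    (((T.IsLeaf a ∧ T.IsLeaf b) ∨ (T.IsInner a ∧ T.IsInner b)) ∧ scLe a b)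

/-- The simplex order on the nodes of a merge tree. -/
def simpLe (a b : List Chir) : Prop :=
  a = b ∨ (b ++ [Chir.L]) <+: a ∨ (a ++ [Chir.R]) <+: b ∨
    ∃ p : List Chir, (p ++ [Chir.L]) <+: a ∧ (p ++ [Chir.R]) <+: b

/-- `y` covers `x` among the nodes of `T` with respect to the simplex order. -/
def simpCovers (T : MergeTree) (x y : List Chir) : Prop :=
  x ≠ y ∧ simpLe x y ∧ ∀ z ∈ T.nodes, simpLe x z → simpLe z y → z = x ∨ z = y

/-! The simplex order is the in-order traversal of the infinite binary tree, so it is pulled back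
from `ℚ` along the dyadic position `key` of a word, and the subtree of a word `w` consists exactly
of the words whose key lies in the open interval of radius `2 ^ (-|w|)` around `key w`. Hence a
leaf of `T` is the only node of `T` in its interval, and covers come from interval endpoints: an
inner node `x` is covered by the leftmost leaf of its right subtree, whose interval has left
endpoint `key x`, and a leaf `x = q ++ L :: R^j` is covered by `q`, whose key is the right endpoint
of the interval of `x`. For adjacent leaves `a = p ++ L :: _` and `b = p ++ R :: _`, a node
strictly between `a` and `p` lies in the left subtree of `p`, and so does its rightmost leaf, which
would then lie strictly between `a` and `b`; symmetrically between `p` and `b`. -/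

def Chir.sgn : Chir → ℚ
  | .L => -1
  | .R => 1

/-- The position of `w` in the in-order traversal of the infinite binary tree, as a dyadic
rational in `(-1, 1)`: read from the end of the path, each letter moves halfway towards `∓1`. -/
def key : List Chir → ℚ
  | [] => 0
  | c :: w => (key w + c.sgn) / 2

def radius (w : List Chir) : ℚ := (2 ^ w.length)⁻¹

@[simp] lemma key_nil : key [] = 0 := rfl

@[simp] lemma key_cons (c : Chir) (w : List Chir) : key (c :: w) = (key w + c.sgn) / 2 := rfl

lemma radius_pos (w : List Chir) : 0 < radius w := by
  unfold radius; positivity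

@[simp] lemma radius_cons (c : Chir) (w : List Chir) : radius (c :: w) = radius w / 2 := by
  simp only [radius, List.length_cons, pow_succ, mul_inv_rev]; ring

lemma radius_append_singleton (w : List Chir) (c : Chir) :
    radius (w ++ [c]) = radius w / 2 := by
  simp only [radius, List.length_append, List.length_cons, List.length_nil, zero_add, pow_succ,
    mul_inv_rev]
  ring

lemma key_append (w s : List Chir) : key (w ++ s) = key w + key s * radius w := by
  induction w with
  | nil => simp [radius]
  | cons c w ih => simp only [List.cons_append, key_cons, radius_cons, ih]; ring

lemma abs_key_le (w : List Chir) : |key w| ≤ 1 - radius w := by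
  induction w with
  | nil => simp [radius]
  | cons c w ih =>
      rw [abs_le] at ih ⊢
      cases c <;> simp only [key_cons, radius_cons, Chir.sgn] <;> constructor <;> linarith

lemma abs_key_lt_one (w : List Chir) : |key w| < 1 := by
  linarith [abs_key_le w, radius_pos w]

lemma key_append_singleton (w : List Chir) (c : Chir) :
    key (w ++ [c]) = key w + c.sgn * radius w / 2 := by
  rw [key_append, key_cons, key_nil]; ring

lemma prefix_iff_abs_key_sub_lt {w z : List Chir} : w <+: z ↔ |key z - key w| < radius w := by
  constructor
  · rintro ⟨s, rfl⟩
    rw [key_append, add_sub_cancel_left, abs_mul, abs_of_pos (radius_pos w)]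
    exact mul_lt_of_lt_one_left (radius_pos w) (abs_key_lt_one s)
  · induction w generalizing z with
    | nil => simp
    | cons c w ih =>
        intro h
        have hw := abs_le.mp (abs_key_le w)
        cases z with
        | nil =>
            rw [abs_lt] at h
            cases c <;> simp only [key_nil, key_cons, radius_cons, Chir.sgn] at h <;>
              linarith [h.1, h.2]
        | cons d z =>
            have hz := abs_lt.mp (abs_key_lt_one z)
            rw [abs_lt] at h
            cases c <;> cases d <;> simp only [key_cons, radius_cons, Chir.sgn] at h <;>
              first
              | exact List.cons_prefix_cons.mpr ⟨rfl, ih (abs_lt.mpr ⟨by linarith, by linarith⟩)⟩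
              | linarith [h.1, h.2]

lemma prefix_append_L_iff {w z : List Chir} :
    w ++ [Chir.L] <+: z ↔ key w - radius w < key z ∧ key z < key w := by
  rw [prefix_iff_abs_key_sub_lt, abs_lt, key_append_singleton, radius_append_singleton]
  simp only [Chir.sgn]
  constructor <;> rintro ⟨h1, h2⟩ <;> constructor <;> linarith

lemma prefix_append_R_iff {w z : List Chir} :
    w ++ [Chir.R] <+: z ↔ key w < key z ∧ key z < key w + radius w := by
  rw [prefix_iff_abs_key_sub_lt, abs_lt, key_append_singleton, radius_append_singleton]
  simp only [Chir.sgn]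
  constructor <;> rintro ⟨h1, h2⟩ <;> constructor <;> linarith

lemma key_injective : Function.Injective key := by
  intro a b h
  have hab : a <+: b := prefix_iff_abs_key_sub_lt.mpr (by simp [h, radius_pos])
  have hba : b <+: a := prefix_iff_abs_key_sub_lt.mpr (by simp [h, radius_pos])
  exact hab.eq_of_length_le hba.length_le

lemma simpLe_cons {a b : List Chir} (c : Chir) (h : simpLe a b) : simpLe (c :: a) (c :: b) := by
  rcases h with rfl | h | h | ⟨p, ha, hb⟩
  · exact Or.inl rfl
  · exact Or.inr (Or.inl (List.cons_prefix_cons.mpr ⟨rfl, h⟩))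
  · exact Or.inr (Or.inr (Or.inl (List.cons_prefix_cons.mpr ⟨rfl, h⟩)))
  · exact Or.inr (Or.inr (Or.inr
      ⟨c :: p, List.cons_prefix_cons.mpr ⟨rfl, ha⟩, List.cons_prefix_cons.mpr ⟨rfl, hb⟩⟩))

lemma simpLe_iff_key_le {a b : List Chir} : simpLe a b ↔ key a ≤ key b := by
  constructor
  · rintro (rfl | h | h | ⟨p, ha, hb⟩)
    · exact le_rfl
    · exact (prefix_append_L_iff.mp h).2.le
    · exact (prefix_append_R_iff.mp h).1.le
    · exact ((prefix_append_L_iff.mp ha).2.trans (prefix_append_R_iff.mp hb).1).le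
  · induction a generalizing b with
    | nil =>
        intro h
        rcases b with _ | ⟨_ | _, b⟩
        · exact Or.inl rfl
        · have := abs_lt.mp (abs_key_lt_one b)
          simp only [key_nil, key_cons, Chir.sgn] at h
          linarith
        · exact Or.inr (Or.inr (Or.inl (List.cons_prefix_cons.mpr ⟨rfl, List.nil_prefix⟩)))
    | cons c a ih =>
        intro h
        have ha := abs_lt.mp (abs_key_lt_one a)
        rcases b with _ | ⟨d, b⟩
        · cases c
          · exact Or.inr (Or.inl (List.cons_prefix_cons.mpr ⟨rfl, List.nil_prefix⟩))
          · simp only [key_nil, key_cons, Chir.sgn] at h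
            linarith
        · have hb := abs_lt.mp (abs_key_lt_one b)
          cases c <;> cases d <;> simp only [key_cons, Chir.sgn] at h
          · exact simpLe_cons _ (ih (by linarith))
          · exact Or.inr (Or.inr (Or.inr ⟨[], List.cons_prefix_cons.mpr ⟨rfl, List.nil_prefix⟩,
              List.cons_prefix_cons.mpr ⟨rfl, List.nil_prefix⟩⟩))
          · linarith
          · exact simpLe_cons _ (ih (by linarith))

lemma simpCovers_of_key_lt {T : MergeTree} {x y : List Chir} (hxy : key x < key y)
    (hgap : ∀ z ∈ T.nodes, key z ∉ Set.Ioo (key x) (key y)) : simpCovers T x y := by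
  refine ⟨fun h => hxy.ne (congrArg key h), simpLe_iff_key_le.mpr hxy.le, fun z hz hxz hzy => ?_⟩
  rw [simpLe_iff_key_le] at hxz hzy
  rcases hxz.eq_or_lt with hx | hx
  · exact Or.inl (key_injective hx.symm)
  rcases hzy.eq_or_lt with hy | hy
  · exact Or.inr (key_injective hy)
  exact (hgap z hz ⟨hx, hy⟩).elim

lemma eq_replicate_or_eq_append_cons_replicate {α : Type*} (t : List α) (c : α) :
    (∃ j, t = List.replicate j c) ∨ ∃ s d j, d ≠ c ∧ t = s ++ d :: List.replicate j c := by
  induction t using List.reverseRecOn with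
  | nil => exact Or.inl ⟨0, rfl⟩
  | append_singleton t d ih =>
      by_cases hd : d = c
      · subst hd
        rcases ih with ⟨j, rfl⟩ | ⟨s, e, j, he, rfl⟩
        · exact Or.inl ⟨j + 1, by simp [List.replicate_succ']⟩
        · exact Or.inr ⟨s, e, j + 1, he, by simp [List.replicate_succ']⟩
      · exact Or.inr ⟨t, d, 0, hd, by simp⟩

lemma key_add_sgn_mul_radius_append_replicate (w : List Chir) (c : Chir) (k : ℕ) :
    key (w ++ List.replicate k c) + c.sgn * radius (w ++ List.replicate k c) =
      key w + c.sgn * radius w := by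
  induction k with
  | zero => simp
  | succ k ih =>
      rw [List.replicate_succ', ← List.append_assoc, key_append_singleton,
        radius_append_singleton, ← ih]
      ring

namespace MergeTree

variable (T : MergeTree)

lemma mem_of_prefix {u n : List Chir} (h : u <+: n) (hn : n ∈ T.nodes) : u ∈ T.nodes := by
  obtain ⟨t, rfl⟩ := h
  induction t using List.reverseRecOn with
  | nil => simpa using hn
  | append_singleton t c ih => exact ih (T.prefix_closed _ c (by simpa using hn))

lemma append_L_mem {w : List Chir} {c : Chir} (h : w ++ [c] ∈ T.nodes) :
    w ++ [Chir.L] ∈ T.nodes := by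
  cases c
  · exact h
  · exact (T.full w).mpr h

variable {T}

lemma IsLeaf.eq_of_prefix {a n : List Chir} (ha : T.IsLeaf a) (han : a <+: n)
    (hn : n ∈ T.nodes) : n = a := by
  obtain ⟨_ | ⟨c, t⟩, rfl⟩ := han
  · simp
  · exact (ha.2 (T.append_L_mem (c := c) (T.mem_of_prefix ⟨t, by simp⟩ hn))).elim

lemma IsLeaf.radius_le_abs_key_sub {a n : List Chir} (ha : T.IsLeaf a) (hn : n ∈ T.nodes)
    (hna : n ≠ a) : radius a ≤ |key n - key a| :=
  le_of_not_gt fun h => hna (ha.eq_of_prefix (prefix_iff_abs_key_sub_lt.mpr h) hn)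

lemma exists_isLeaf_append_replicate {n : List Chir} (hn : n ∈ T.nodes) (c : Chir) :
    ∃ k, T.IsLeaf (n ++ List.replicate k c) := by
  by_contra! h
  have hmem : ∀ k, n ++ List.replicate k c ∈ T.nodes := by
    intro k
    induction k with
    | zero => simpa using hn
    | succ k ih =>
        have hL : n ++ List.replicate k c ++ [Chir.L] ∈ T.nodes :=
          not_not.mp fun h' => h k ⟨ih, h'⟩
        have hc : n ++ List.replicate k c ++ [c] ∈ T.nodes := by
          cases c
          · exact hL
          · exact (T.full _).mp hL
        simpa [List.replicate_succ'] using hc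
  have := T.nodes.le_sup (f := List.length) (hmem (T.nodes.sup List.length + 1))
  simp only [List.length_append, List.length_replicate] at this
  omega

lemma key_append_replicate_L_le_of_isLeaf {p n : List Chir} {k : ℕ}
    (ha : T.IsLeaf (p ++ List.replicate k Chir.L)) (hpn : p <+: n) (hn : n ∈ T.nodes) :
    key (p ++ List.replicate k Chir.L) ≤ key n := by
  rcases eq_or_ne n (p ++ List.replicate k Chir.L) with rfl | hna
  · exact le_rfl
  have hleaf := le_abs'.mp (ha.radius_le_abs_key_sub hn hna)
  have hsub := (abs_lt.mp (prefix_iff_abs_key_sub_lt.mp hpn)).1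
  have hend := key_add_sgn_mul_radius_append_replicate p Chir.L k
  simp only [Chir.sgn] at hend
  rcases hleaf with h | h <;> linarith

lemma le_key_append_replicate_R_of_isLeaf {p n : List Chir} {k : ℕ}
    (hb : T.IsLeaf (p ++ List.replicate k Chir.R)) (hpn : p <+: n) (hn : n ∈ T.nodes) :
    key n ≤ key (p ++ List.replicate k Chir.R) := by
  rcases eq_or_ne n (p ++ List.replicate k Chir.R) with rfl | hnb
  · exact le_rfl
  have hleaf := le_abs'.mp (hb.radius_le_abs_key_sub hn hnb)
  have hsub := (abs_lt.mp (prefix_iff_abs_key_sub_lt.mp hpn)).2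
  have hend := key_add_sgn_mul_radius_append_replicate p Chir.R k
  simp only [Chir.sgn] at hend
  rcases hleaf with h | h <;> linarith

lemma simpCovers_of_isLeaf_left {x y : List Chir} (hx : T.IsLeaf x)
    (hy : key y = key x + radius x) : simpCovers T x y := by
  refine simpCovers_of_key_lt (by linarith [radius_pos x]) fun z hz ⟨hxz, hzy⟩ => ?_
  have := hx.radius_le_abs_key_sub hz (by rintro rfl; exact hxz.false)
  rw [abs_of_pos (sub_pos.mpr hxz)] at this
  linarith

lemma simpCovers_of_isLeaf_right {x y : List Chir} (hy : T.IsLeaf y)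
    (hx : key x = key y - radius y) : simpCovers T x y := by
  refine simpCovers_of_key_lt (by linarith [radius_pos y]) fun z hz ⟨hxz, hzy⟩ => ?_
  have := hy.radius_le_abs_key_sub hz (by rintro rfl; exact hzy.false)
  rw [abs_of_neg (sub_neg.mpr hzy)] at this
  linarith

lemma exists_mem_prefix_simpCovers {p x : List Chir} {k : ℕ}
    (hb : T.IsLeaf (p ++ List.replicate k Chir.R)) (hx : x ∈ T.nodes) (hpx : p <+: x)
    (hxb : x ≠ p ++ List.replicate k Chir.R) : ∃ y ∈ T.nodes, p <+: y ∧ simpCovers T x y := by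
  by_cases hinner : x ++ [Chir.L] ∈ T.nodes
  · obtain ⟨m, hy⟩ := T.exists_isLeaf_append_replicate ((T.full x).mp hinner) Chir.L
    refine ⟨_, hy.1, hpx.trans ((List.prefix_append _ _).trans (List.prefix_append _ _)),
      simpCovers_of_isLeaf_right hy ?_⟩
    have := key_add_sgn_mul_radius_append_replicate (x ++ [Chir.R]) Chir.L m
    simp only [Chir.sgn, key_append_singleton, radius_append_singleton] at this
    linarith
  have hx : T.IsLeaf x := ⟨hx, hinner⟩
  obtain ⟨t, rfl⟩ := hpx
  rcases eq_replicate_or_eq_append_cons_replicate t Chir.R with ⟨j, rfl⟩ | ⟨s, d, j, hd, rfl⟩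
  · refine (hxb ?_).elim
    rcases le_total j k with h | h
    · exact (hx.eq_of_prefix ((List.prefix_append_right_inj p).mpr
        (List.prefix_replicate_iff.mpr ⟨by simpa, by simp⟩)) hb.1).symm
    · exact hb.eq_of_prefix ((List.prefix_append_right_inj p).mpr
        (List.prefix_replicate_iff.mpr ⟨by simpa, by simp⟩)) hx.1
  obtain rfl : d = Chir.L := by cases d <;> simp_all
  have e : p ++ (s ++ Chir.L :: List.replicate j Chir.R) =
      p ++ s ++ [Chir.L] ++ List.replicate j Chir.R := by simp
  rw [e] at hx ⊢
  refine ⟨p ++ s, T.mem_of_prefix ((List.prefix_append _ _).trans (List.prefix_append _ _)) hx.1,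
    List.prefix_append _ _, simpCovers_of_isLeaf_left hx ?_⟩
  have := key_add_sgn_mul_radius_append_replicate (p ++ s ++ [Chir.L]) Chir.R j
  simp only [Chir.sgn, key_append_singleton, radius_append_singleton] at this
  linarith

lemma IsLeaf.append_L_prefix_and_append_R_prefix {a b p : List Chir} (ha : T.IsLeaf a)
    (hb : T.IsLeaf b) (hab : key a < key b) (hpa : p <+: a) (hpb : p <+: b)
    (hmax : ∀ q, q <+: a → q <+: b → q <+: p) : p ++ [Chir.L] <+: a ∧ p ++ [Chir.R] <+: b := by
  obtain ⟨_ | ⟨c, sa⟩, rfl⟩ := hpa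
  · rw [List.append_nil] at ha hab
    exact (hab.ne' (congrArg key (ha.eq_of_prefix hpb hb.1))).elim
  obtain ⟨_ | ⟨d, sb⟩, rfl⟩ := hpb
  · rw [List.append_nil] at hb hab
    exact (hab.ne (congrArg key (hb.eq_of_prefix ⟨_, rfl⟩ ha.1))).elim
  have hcd : c ≠ d := by
    rintro rfl
    have := (hmax (p ++ [c]) ⟨sa, by simp⟩ ⟨sb, by simp⟩).length_le
    simp at this
  have hL : ∀ s, p ++ [Chir.L] <+: p ++ Chir.L :: s := fun s => ⟨s, by simp⟩
  have hR : ∀ s, p ++ [Chir.R] <+: p ++ Chir.R :: s := fun s => ⟨s, by simp⟩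
  cases c <;> cases d
  · exact (hcd rfl).elim
  · exact ⟨hL sa, hR sb⟩
  · have := (prefix_append_L_iff.mp (hL sb)).2
    have := (prefix_append_R_iff.mp (hR sa)).1
    linarith
  · exact (hcd rfl).elim

lemma simpCovers_of_adjacent_left {a b p : List Chir}
    (hadj : ∀ c ∈ T.nodes, T.IsLeaf c → simpLe a c → simpLe c b → c = a ∨ c = b)
    (hpa : p ++ [Chir.L] <+: a) (hpb : p ++ [Chir.R] <+: b) : simpCovers T a p := by
  obtain ⟨hpa₁, hpa₂⟩ := prefix_append_L_iff.mp hpa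
  have hpb' := (prefix_append_R_iff.mp hpb).1
  refine simpCovers_of_key_lt hpa₂ fun z hz ⟨haz, hzp⟩ => ?_
  have hpz : p ++ [Chir.L] <+: z := prefix_append_L_iff.mpr ⟨by linarith, hzp⟩
  obtain ⟨k, hc⟩ := T.exists_isLeaf_append_replicate hz Chir.R
  have hzc := le_key_append_replicate_R_of_isLeaf hc (List.prefix_refl z) hz
  have hcp :=
    (prefix_append_L_iff.mp (hpz.trans (List.prefix_append z (List.replicate k Chir.R)))).2
  rcases hadj _ hc.1 hc (simpLe_iff_key_le.mpr (by linarith))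
    (simpLe_iff_key_le.mpr (by linarith)) with h | h <;> rw [h] at hzc hcp <;> linarith

lemma simpCovers_of_adjacent_right {a b p : List Chir}
    (hadj : ∀ c ∈ T.nodes, T.IsLeaf c → simpLe a c → simpLe c b → c = a ∨ c = b)
    (hpa : p ++ [Chir.L] <+: a) (hpb : p ++ [Chir.R] <+: b) : simpCovers T p b := by
  obtain ⟨hpb₁, hpb₂⟩ := prefix_append_R_iff.mp hpb
  have hpa' := (prefix_append_L_iff.mp hpa).2
  refine simpCovers_of_key_lt hpb₁ fun z hz ⟨hpz₀, hzb⟩ => ?_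
  have hpz : p ++ [Chir.R] <+: z := prefix_append_R_iff.mpr ⟨hpz₀, by linarith⟩
  obtain ⟨k, hc⟩ := T.exists_isLeaf_append_replicate hz Chir.L
  have hcz := key_append_replicate_L_le_of_isLeaf hc (List.prefix_refl z) hz
  have hpc :=
    (prefix_append_R_iff.mp (hpz.trans (List.prefix_append z (List.replicate k Chir.L)))).1
  rcases hadj _ hc.1 hc (simpLe_iff_key_le.mpr (by linarith))
    (simpLe_iff_key_le.mpr (by linarith)) with h | h <;> rw [h] at hcz hpc <;> linarith

end MergeTree

/-- Subtrees form chains of cover relations in the simplex order: for an inner node `p`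
whose subtree has leftmost leaf `a = p ++ L…L` and rightmost leaf `b = p ++ R…R`, every
node of the subtree lies between `a` and `b`, and every node of the subtree other than
`b` is covered by another node of the subtree.  Moreover, for two adjacent leaves, the
left one is covered by their youngest common ancestor, which is covered by the right
one. -/
theorem stmt7 (T : MergeTree) :
    (∀ p : List Chir, T.IsInner p → ∀ ka kb : ℕ,
        T.IsLeaf (p ++ List.replicate ka Chir.L) →
        T.IsLeaf (p ++ List.replicate kb Chir.R) →
        (∀ n ∈ T.nodes, p <+: n →
            simpLe (p ++ List.replicate ka Chir.L) n ∧
            simpLe n (p ++ List.replicate kb Chir.R)) ∧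
        (∀ x ∈ T.nodes, p <+: x → x ≠ p ++ List.replicate kb Chir.R →
            ∃ y ∈ T.nodes, p <+: y ∧ simpCovers T x y)) ∧
    (∀ a ∈ T.nodes, ∀ b ∈ T.nodes, T.IsLeaf a → T.IsLeaf b → simpLe a b → a ≠ b →
        (∀ c ∈ T.nodes, T.IsLeaf c → simpLe a c → simpLe c b → c = a ∨ c = b) →
        ∀ p : List Chir,
          (p <+: a ∧ p <+: b ∧ ∀ q : List Chir, q <+: a → q <+: b → q <+: p) →
          simpCovers T a p ∧ simpCovers T p b) := by
  refine ⟨fun p _ ka kb ha hb => ⟨fun n hn hpn => ⟨?_, ?_⟩, fun x hx hpx hxb => ?_⟩, ?_⟩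
  · exact simpLe_iff_key_le.mpr (MergeTree.key_append_replicate_L_le_of_isLeaf ha hpn hn)
  · exact simpLe_iff_key_le.mpr (MergeTree.le_key_append_replicate_R_of_isLeaf hb hpn hn)
  · exact MergeTree.exists_mem_prefix_simpCovers hb hx hpx hxb
  · intro a _ b _ ha hb hab hne hadj p ⟨hpa, hpb, hmax⟩
    have hlt : key a < key b :=
      (simpLe_iff_key_le.mp hab).lt_of_ne fun h => hne (key_injective h)
    obtain ⟨hL, hR⟩ := ha.append_L_prefix_and_append_R_prefix hb hlt hpa hpb hmax
    exact ⟨MergeTree.simpCovers_of_adjacent_left hadj hL hR,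
      MergeTree.simpCovers_of_adjacent_right hadj hL hR⟩
end

section
/- Let f be a discrete Morse function on a path P induced by a Morse order on a merge tree T via the order isomorphism φ. Then every connected component of every sublevel complex of (P,f) corresponds under φ to a subtree of T; specifically, the image under φ of the simplices of such a component equals the set of nodes of the subtree rooted at the node with the maximal Morse label in that image. -/
/-- A Morse order on a merge tree: a total order on the nodes that attains its maximum
at the root of each subtree and its minimum inside the child-subtree matching the
chirality of the root of the subtree. -/
def IsMorseOrder (T : MergeTree) (r : List Chir → List Chir → Prop) : Prop :=
  (∀ a ∈ T.nodes, r a a) ∧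
  (∀ a ∈ T.nodes, ∀ b ∈ T.nodes, r a b → r b a → a = b) ∧
  (∀ a ∈ T.nodes, ∀ b ∈ T.nodes, ∀ c ∈ T.nodes, r a b → r b c → r a c) ∧
  (∀ a ∈ T.nodes, ∀ b ∈ T.nodes, r a b ∨ r b a) ∧
  (∀ p ∈ T.nodes, ∀ n ∈ T.nodes, p <+: n → r n p) ∧
  (∀ p : List Chir, T.IsInner p → ∃ m ∈ T.nodes, (p ++ [chir p]) <+: m ∧
      ∀ n ∈ T.nodes, p <+: n → r m n)

/-- The Morse labeling induced by an order `r`: the unique order isomorphism from the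
nodes of `T` onto `{0, 1, …, 2·i(T)}`. -/
def IsMorseLabeling (T : MergeTree) (r : List Chir → List Chir → Prop)
    (lab : List Chir → ℕ) : Prop :=
  (∀ n ∈ T.nodes, lab n < 2 * T.innerCount + 1) ∧
  (∀ k : ℕ, k < 2 * T.innerCount + 1 → ∃ n ∈ T.nodes, lab n = k) ∧
  (∀ a ∈ T.nodes, ∀ b ∈ T.nodes, lab a = lab b → a = b) ∧
  (∀ a ∈ T.nodes, ∀ b ∈ T.nodes, (r a b ↔ lab a ≤ lab b))

/-- An order-preserving bijection from the simplices of a path with `i(T)` 1-simplices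
(concretely: `Fin (2·i(T)+1)` with its linear order, which is the simplex order coming
from an orientation) to the nodes of `T` with the simplex order. -/
def IsSimplexIso (T : MergeTree) (φ : Fin (2 * T.innerCount + 1) → List Chir) : Prop :=
  (∀ i, φ i ∈ T.nodes) ∧
  (∀ n ∈ T.nodes, ∃ i, φ i = n) ∧
  (∀ i j, i ≤ j ↔ simpLe (φ i) (φ j))

/-- A discrete Morse function, with only critical cells, on a path whose simplices are
listed left to right as `Fin N` (even indices are vertices, odd indices are edges):
injective and weakly increasing from a vertex to an incident edge. -/
def IsPathDMFallCrit {N : ℕ} {α : Type*} [LinearOrder α] (f : Fin N → α) : Prop :=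
  Function.Injective f ∧
  ∀ j : ℕ, ∀ h : 2 * j + 2 < N,
    f ⟨2 * j, by omega⟩ ≤ f ⟨2 * j + 1, by omega⟩ ∧
    f ⟨2 * j + 2, by omega⟩ ≤ f ⟨2 * j + 1, by omega⟩

/-! The simplex order is the in-order traversal of `T`: it is the lexicographic order of the
words `w.map (L ↦ 0, R ↦ 2) ++ [1]`, so every subtree occupies an interval of simplices, and
the top of a fork lies between its two branches. Let `n₀` be the node of maximal label in a
component. Labels only decrease from a node to its descendants, so no proper ancestor of `n₀`
lies in the component; since some common ancestor of `n₀` and any other node of the component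
lies between them, hence in the component, it is `n₀` itself. Conversely, a descendant of `n₀`
outside the component would pull a simplex adjacent to the component into the subtree of `n₀`,
giving it a label `≤ c`. -/

theorem List.IsPrefix.of_le_of_le {α : Type*} [LinearOrder α] :
    ∀ {u s t y : List α}, u <+: s → u <+: t → s ≤ y → y ≤ t → u <+: y
  | [], _, _, _, _, _, _, _ => List.nil_prefix
  | c :: u, _, _, y, ⟨s, rfl⟩, ⟨t, rfl⟩, hsy, hyt => by
    -- Mathlib's `≤` on lists is by definition `=` or `List.Lex (· < ·)`
    change _ = _ ∨ List.Lex (· < ·) _ _ at hsy hyt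
    rcases hsy with rfl | hsy
    · exact List.prefix_append _ _
    rcases hyt with rfl | hyt
    · exact List.prefix_append _ _
    cases hsy with
    | cons hsy =>
      cases hyt with
      | cons hyt => exact List.cons_prefix_cons.mpr ⟨rfl, (List.prefix_append u s).of_le_of_le
          (List.prefix_append u t) (Or.inr hsy) (Or.inr hyt)⟩
      | rel hcc => exact absurd hcc (lt_irrefl c)
    | rel hcd =>
      cases hyt with
      | cons => exact absurd hcd (lt_irrefl c)
      | rel hdc => exact absurd (hcd.trans hdc) (lt_irrefl c)

theorem List.append_cons_le_append_cons {α : Type*} [LinearOrder α] {l s t : List α} {x y : α}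
    (h : x < y) : l ++ x :: s ≤ l ++ y :: t :=
  Or.inr (List.Lex.append_left _ (.rel h) l)

def inorderDigit : Chir → ℕ
  | .L => 0
  | .R => 2

theorem inorderDigit_injective : Function.Injective inorderDigit := by
  rintro (_ | _) (_ | _) h <;> first | rfl | cases h

def inorderKey (w : List Chir) : List ℕ := w.map inorderDigit ++ [1]

theorem inorderKey_le_of_simpLe {a b : List Chir} (h : simpLe a b) :
    inorderKey a ≤ inorderKey b := by
  rcases h with rfl | ⟨s, rfl⟩ | ⟨t, rfl⟩ | ⟨p, ⟨s, rfl⟩, ⟨t, rfl⟩⟩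
  all_goals
    simp only [inorderKey, List.map_append, List.map_cons, List.append_assoc, List.cons_append,
      List.nil_append]
  · exact le_rfl
  all_goals exact List.append_cons_le_append_cons (by decide)

theorem prefix_of_map_prefix_inorderKey {m x : List Chir}
    (h : m.map inorderDigit <+: inorderKey x) : m <+: x := by
  rcases List.prefix_concat_iff.mp h with h | h
  · have : 1 ∈ m.map inorderDigit := by simp [h]
    obtain ⟨_ | _, -, ⟨⟩⟩ := List.mem_map.mp this
  · obtain ⟨l, hl, hml⟩ := List.prefix_map_iff.mp h
    rwa [List.map_injective_iff.mpr inorderDigit_injective hml]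

theorem prefix_of_simpLe_of_simpLe {m a b x : List Chir} (ha : m <+: a) (hb : m <+: b)
    (hax : simpLe a x) (hxb : simpLe x b) : m <+: x :=
  prefix_of_map_prefix_inorderKey <|
    ((ha.map _).trans (List.prefix_append _ _)).of_le_of_le
      ((hb.map _).trans (List.prefix_append _ _))
      (inorderKey_le_of_simpLe hax) (inorderKey_le_of_simpLe hxb)

theorem exists_prefix_between_of_simpLe {a b : List Chir} (h : simpLe a b) :
    ∃ m, m <+: a ∧ m <+: b ∧ simpLe a m ∧ simpLe m b := by
  rcases h with rfl | hb | ha | ⟨p, hpa, hpb⟩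
  · exact ⟨a, List.prefix_refl a, List.prefix_refl a, .inl rfl, .inl rfl⟩
  · exact ⟨b, (List.prefix_append _ _).trans hb, List.prefix_refl b, .inr (.inl hb), .inl rfl⟩
  · exact ⟨a, List.prefix_refl a, (List.prefix_append _ _).trans ha, .inl rfl,
      .inr (.inr (.inl ha))⟩
  · exact ⟨p, (List.prefix_append _ _).trans hpa, (List.prefix_append _ _).trans hpb,
      .inr (.inl hpa), .inr (.inr (.inl hpb))⟩

theorem MergeTree.mem_of_prefix_s11 (T : MergeTree) {p n : List Chir} (h : p <+: n)
    (hn : n ∈ T.nodes) : p ∈ T.nodes := by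
  obtain ⟨t, rfl⟩ := h
  induction t using List.reverseRecOn with
  | nil => simpa using hn
  | append_singleton t x ih => exact ih (T.prefix_closed _ x (by simpa using hn))

theorem IsMorseLabeling.le_of_prefix {T : MergeTree} {r : List Chir → List Chir → Prop}
    {lab : List Chir → ℕ} (hlab : IsMorseLabeling T r lab) (hr : IsMorseOrder T r)
    {p n : List Chir} (hp : p ∈ T.nodes) (hn : n ∈ T.nodes) (h : p <+: n) : lab n ≤ lab p :=
  (hlab.2.2.2 n hn p hp).mp (hr.2.2.2.2.1 p hp n hn h)

namespace IsSimplexIso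

variable {T : MergeTree} {φ : Fin (2 * T.innerCount + 1) → List Chir} (hφ : IsSimplexIso T φ)
include hφ

theorem prefix_of_le_of_le {m : List Chir} {i j k : Fin (2 * T.innerCount + 1)}
    (hi : m <+: φ i) (hj : m <+: φ j) (hik : i ≤ k) (hkj : k ≤ j) : m <+: φ k :=
  prefix_of_simpLe_of_simpLe hi hj ((hφ.2.2 i k).mp hik) ((hφ.2.2 k j).mp hkj)

theorem exists_prefix_between {i j : Fin (2 * T.innerCount + 1)} (hij : i ≤ j) :
    ∃ k, i ≤ k ∧ k ≤ j ∧ φ k <+: φ i ∧ φ k <+: φ j := by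
  obtain ⟨m, hmi, hmj, him, hmj'⟩ := exists_prefix_between_of_simpLe ((hφ.2.2 i j).mp hij)
  obtain ⟨k, rfl⟩ := hφ.2.1 m (T.mem_of_prefix_s11 hmi (hφ.1 i))
  exact ⟨k, (hφ.2.2 i k).mpr him, (hφ.2.2 k j).mpr hmj', hmi, hmj⟩

variable {r : List Chir → List Chir → Prop} {lab : List Chir → ℕ}
  (hr : IsMorseOrder T r) (hlab : IsMorseLabeling T r lab)
  {lo hi i₀ : Fin (2 * T.innerCount + 1)} (hlo : lo ≤ i₀) (hhi : i₀ ≤ hi)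
include hr hlab hlo hhi

theorem prefix_of_isMaxOn_label
    (hmax : ∀ i, lo ≤ i → i ≤ hi → lab (φ i) ≤ lab (φ i₀))
    {j : Fin (2 * T.innerCount + 1)} (hloj : lo ≤ j) (hjhi : j ≤ hi) : φ i₀ <+: φ j := by
  have hanc : ∀ k, lo ≤ k → k ≤ hi → φ k <+: φ i₀ → φ k = φ i₀ := fun k h1 h2 h =>
    hlab.2.2.1 _ (hφ.1 k) _ (hφ.1 i₀)
      (le_antisymm (hmax k h1 h2) (hlab.le_of_prefix hr (hφ.1 k) (hφ.1 i₀) h))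
  rcases le_total j i₀ with h | h
  · obtain ⟨k, hjk, hki, hkj, hki'⟩ := hφ.exists_prefix_between h
    rwa [← hanc k (hloj.trans hjk) (hki.trans hhi) hki']
  · obtain ⟨k, hik, hkj, hki, hkj'⟩ := hφ.exists_prefix_between h
    rwa [← hanc k (hlo.trans hik) (hkj.trans hjhi) hki]

theorem mem_Icc_of_prefix {c : ℕ} (hsub : ∀ i, lo ≤ i → i ≤ hi → lab (φ i) ≤ c)
    (hmaxl : ∀ i : Fin (2 * T.innerCount + 1), i.1 + 1 = lo.1 → c < lab (φ i))
    (hmaxr : ∀ i : Fin (2 * T.innerCount + 1), hi.1 + 1 = i.1 → c < lab (φ i))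
    {j : Fin (2 * T.innerCount + 1)} (h : φ i₀ <+: φ j) : lo ≤ j ∧ j ≤ hi := by
  have hbetween : ∀ k, j ≤ k ∧ k ≤ i₀ ∨ i₀ ≤ k ∧ k ≤ j → lab (φ k) ≤ c := by
    rintro k (⟨hjk, hki⟩ | ⟨hik, hkj⟩)
    all_goals refine (hlab.le_of_prefix hr (hφ.1 i₀) (hφ.1 k) ?_).trans (hsub i₀ hlo hhi)
    · exact hφ.prefix_of_le_of_le h (List.prefix_refl _) hjk hki
    · exact hφ.prefix_of_le_of_le (List.prefix_refl _) h hik hkj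
  constructor
  · by_contra! hj
    obtain ⟨k, hk⟩ : ∃ k : Fin (2 * T.innerCount + 1), k.1 + 1 = lo.1 :=
      ⟨⟨lo - 1, by omega⟩, by simp only; omega⟩
    exact absurd (hbetween k (.inl ⟨by omega, by omega⟩)) (not_le.mpr (hmaxl k hk))
  · by_contra! hj
    obtain ⟨k, hk⟩ : ∃ k : Fin (2 * T.innerCount + 1), hi.1 + 1 = k.1 :=
      ⟨⟨hi + 1, by omega⟩, rfl⟩
    exact absurd (hbetween k (.inr ⟨by omega, by omega⟩)) (not_le.mpr (hmaxr k hk))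

end IsSimplexIso

/-- For a dMf on a path induced by a Morse order on `T`, every connected component of
every sublevel complex (a maximal interval `[lo, hi]` of simplices of value `≤ c`)
corresponds under `φ` to a subtree of `T`, namely the subtree rooted at the node of
maximal Morse label in the image of the component. -/
theorem stmt11 (T : MergeTree) (r : List Chir → List Chir → Prop)
    (hr : IsMorseOrder T r) (lab : List Chir → ℕ) (hlab : IsMorseLabeling T r lab)
    (φ : Fin (2 * T.innerCount + 1) → List Chir) (hφ : IsSimplexIso T φ)
    (c : ℕ) (lo hi : Fin (2 * T.innerCount + 1)) (hlohi : lo ≤ hi)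
    (hsub : ∀ i, lo ≤ i → i ≤ hi → lab (φ i) ≤ c)
    (hmaxl : ∀ i : Fin (2 * T.innerCount + 1), i.1 + 1 = lo.1 → c < lab (φ i))
    (hmaxr : ∀ i : Fin (2 * T.innerCount + 1), hi.1 + 1 = i.1 → c < lab (φ i)) :
    ∃ i₀ : Fin (2 * T.innerCount + 1), lo ≤ i₀ ∧ i₀ ≤ hi ∧
      (∀ i, lo ≤ i → i ≤ hi → lab (φ i) ≤ lab (φ i₀)) ∧
      ∀ n ∈ T.nodes, (φ i₀ <+: n ↔ ∃ i, lo ≤ i ∧ i ≤ hi ∧ φ i = n) := by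
  obtain ⟨i₀, hi₀, hmax⟩ := (Finset.Icc lo hi).exists_max_image (fun i => lab (φ i))
    ⟨lo, Finset.mem_Icc.mpr ⟨le_rfl, hlohi⟩⟩
  obtain ⟨hlo, hhi⟩ := Finset.mem_Icc.mp hi₀
  have hmax' : ∀ i, lo ≤ i → i ≤ hi → lab (φ i) ≤ lab (φ i₀) := fun i h1 h2 =>
    hmax i (Finset.mem_Icc.mpr ⟨h1, h2⟩)
  refine ⟨i₀, hlo, hhi, hmax', fun n hn => ⟨fun h => ?_, ?_⟩⟩
  · obtain ⟨j, rfl⟩ := hφ.2.1 n hn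
    obtain ⟨hloj, hjhi⟩ := hφ.mem_Icc_of_prefix hr hlab hlo hhi hsub hmaxl hmaxr h
    exact ⟨j, hloj, hjhi, rfl⟩
  · rintro ⟨j, hloj, hjhi, rfl⟩
    exact hφ.prefix_of_isMaxOn_label hr hlab hlo hhi hmax' hloj hjhi
end
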